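/- arXiv:0704.0875 — 7 statements merged into one kernel-verified Lean document; each statement's English description precedes it below -/
import Mathlib

section
/- Let p > 3 be prime and let k ≥ t ≥ 1 and t ≥ s ≥ 1 be integers. Then gcd(R_{p^k}/R_{p^t}, R_{p^s}) = 1, where R_n = (10^n - 1)/9 (note R_{p^t} divides R_{p^k}). -/
def repunit (n : ℕ) : ℕ := (10 ^ n - 1) / 9

/-! Put `T = 10 ^ p ^ t`. The quotient is the geometric sum `1 + T + ⋯ + T ^ (p ^ (k - t) - 1)`,
and a common divisor `d` divides `R_{p^s} ∣ R_{p^t} ∣ T - 1`, so the quotient is `≡ p ^ (k - t)`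
modulo `d`; hence `d` is a power of `p`. But `p ∤ R_{p^s}` when `p ≠ 3`. -/

open Finset

theorem nine_mul_repunit_add_one (n : ℕ) : 9 * repunit n + 1 = 10 ^ n := by
  have h9 : 9 ∣ 10 ^ n - 1 := by simpa using Nat.sub_dvd_pow_sub_pow 10 1 n
  have h1 : 1 ≤ 10 ^ n := Nat.one_le_pow _ _ (by norm_num)
  rw [repunit, Nat.mul_div_cancel' h9]
  omega

theorem repunit_pos {n : ℕ} (hn : 0 < n) : 0 < repunit n := by
  have h := nine_mul_repunit_add_one n
  have h10 : 1 < 10 ^ n := Nat.one_lt_pow hn.ne' (by norm_num)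
  omega

theorem repunit_mul (m n : ℕ) : repunit (m * n) = repunit m * ∑ i ∈ range n, (10 ^ m) ^ i := by
  apply Nat.eq_of_mul_eq_mul_left (show 0 < 9 by norm_num)
  apply Nat.add_right_cancel (m := 1)
  rw [nine_mul_repunit_add_one, pow_mul, ← nine_mul_repunit_add_one m, ← geom_sum_mul_add]
  ring

theorem repunit_dvd_repunit {m n : ℕ} (h : m ∣ n) : repunit m ∣ repunit n := by
  obtain ⟨c, rfl⟩ := h
  rw [repunit_mul]
  exact dvd_mul_right _ _

theorem repunit_mul_div_repunit {m : ℕ} (hm : 0 < m) (n : ℕ) :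
    repunit (m * n) / repunit m = ∑ i ∈ range n, (10 ^ m) ^ i := by
  rw [repunit_mul, Nat.mul_div_cancel_left _ (repunit_pos hm)]

theorem ten_pow_modEq_one_of_dvd_repunit {d n : ℕ} (h : d ∣ repunit n) : 10 ^ n ≡ 1 [MOD d] := by
  rw [← nine_mul_repunit_add_one]
  simpa using ((Nat.modEq_zero_iff_dvd.mpr h).mul_left 9).add_right 1

theorem geom_sum_modEq_of_modEq_one {x d : ℕ} (hx : x ≡ 1 [MOD d]) (n : ℕ) :
    ∑ i ∈ range n, x ^ i ≡ n [MOD d] := by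
  simpa using Nat.ModEq.sum (s := range n) fun i _ ↦ hx.pow i

/-- By Fermat, `p ∣ R_{p^s}` forces `10 ≡ 1 [MOD p]`, i.e. `p ∣ 9`. -/
theorem coprime_repunit_prime_pow {p : ℕ} (hp : p.Prime) (hp3 : p ≠ 3) (s : ℕ) :
    Nat.Coprime p (repunit (p ^ s)) := by
  rw [hp.coprime_iff_not_dvd]
  intro h
  have := Fact.mk hp
  have h10 := congrArg (Nat.cast : ℕ → ZMod p) (nine_mul_repunit_add_one (p ^ s))
  push_cast [(ZMod.natCast_eq_zero_iff _ _).mpr h, ZMod.pow_card_pow] at h10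
  have h9 : p ∣ 3 ^ 2 := by
    rw [← ZMod.natCast_eq_zero_iff]
    push_cast
    linear_combination -h10
  exact hp3 ((Nat.prime_dvd_prime_iff_eq hp Nat.prime_three).mp (hp.dvd_of_dvd_pow h9))

theorem gcd_repunit_pow_div_general (p k t s : ℕ) (hp : p.Prime) (hp3 : 3 < p)
    (hkt : t ≤ k) (hts : s ≤ t) :
    Nat.gcd (repunit (p ^ k) / repunit (p ^ t)) (repunit (p ^ s)) = 1 := by
  rw [← pow_mul_pow_sub p hkt, repunit_mul_div_repunit (pow_pos hp.pos t)]
  set g := Nat.gcd (∑ i ∈ range (p ^ (k - t)), (10 ^ p ^ t) ^ i) (repunit (p ^ s))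
  have hg_repunit : g ∣ repunit (p ^ t) :=
    (Nat.gcd_dvd_right _ _).trans (repunit_dvd_repunit (pow_dvd_pow p hts))
  have hg_pow : g ∣ p ^ (k - t) :=
    ((geom_sum_modEq_of_modEq_one (ten_pow_modEq_one_of_dvd_repunit hg_repunit) _).dvd_iff
      dvd_rfl).mp (Nat.gcd_dvd_left _ _)
  exact Nat.eq_one_of_dvd_coprimes ((coprime_repunit_prime_pow hp hp3.ne' s).pow_left (k - t))
    hg_pow (Nat.gcd_dvd_right _ _)

theorem gcd_repunit_pow_div (p k t s : ℕ) (hp : p.Prime) (hp3 : 3 < p)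
    (hkt : t ≤ k) (hts : s ≤ t) (hs : 1 ≤ s) :
    Nat.gcd (repunit (p ^ k) / repunit (p ^ t)) (repunit (p ^ s)) = 1 :=
  gcd_repunit_pow_div_general p k t s hp hp3 hkt hts
end

section
/- If a ≥ 1 and b ≥ 1 are integers with gcd(a, b) = 1, then the product R_a · R_b divides R_{ab}, where R_n = (10^n - 1)/9. -/
lemma nine_dvd (n : ℕ) : 9 ∣ 10 ^ n - 1 := by
  simpa using Nat.sub_dvd_pow_sub_pow 10 1 n

lemma nine_mul_repunit (n : ℕ) : 9 * repunit n = 10 ^ n - 1 :=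
  Nat.mul_div_cancel' (nine_dvd n)

lemma gcd_step (a b : ℕ) (ha : a ≠ 0) :
    Nat.gcd (10 ^ a - 1) (10 ^ b - 1) = Nat.gcd (10 ^ (b % a) - 1) (10 ^ a - 1) := by
  have h3 : (1:ℕ) ≤ 10 ^ (b % a) := Nat.one_le_pow _ _ (by norm_num)
  have hq : (1:ℕ) ≤ 10 ^ (a * (b / a)) := Nat.one_le_pow _ _ (by norm_num)
  obtain ⟨K, hK⟩ : ((10:ℕ) ^ a - 1) ∣ 10 ^ (a * (b / a)) - 1 := by
    simpa [pow_mul] using Nat.sub_dvd_pow_sub_pow ((10:ℕ)^a) 1 (b / a)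
  have hpow : (10:ℕ) ^ b = 10 ^ (a * (b / a)) * 10 ^ (b % a) := by
    rw [← pow_add, Nat.div_add_mod]
  have hq' : (10:ℕ) ^ (a * (b / a)) = (10 ^ a - 1) * K + 1 := by omega
  have key : (10:ℕ) ^ b - 1 = (10 ^ (b % a) - 1) + (10 ^ a - 1) * (K * 10 ^ (b % a)) := by
    have : (10:ℕ) ^ b = (10 ^ a - 1) * (K * 10 ^ (b % a)) + 10 ^ (b % a) := by
      rw [hpow, hq']; ring
    omega
  rw [key, Nat.gcd_add_mul_left_right, Nat.gcd_comm]

lemma gcd_pow_sub_one (a : ℕ) : ∀ b : ℕ,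
    Nat.gcd (10 ^ a - 1) (10 ^ b - 1) = 10 ^ (Nat.gcd a b) - 1 := by
  induction a using Nat.strong_induction_on with
  | _ a ih =>
    intro b
    rcases Nat.eq_zero_or_pos a with rfl | ha
    · simp
    · rw [gcd_step a b ha.ne', ih (b % a) (Nat.mod_lt b ha) a, ← Nat.gcd_rec]

theorem repunit_mul_dvd_of_coprime (a b : ℕ) (ha : 1 ≤ a) (hb : 1 ≤ b)
    (h : Nat.gcd a b = 1) : repunit a * repunit b ∣ repunit (a * b) := by
  have hco : Nat.Coprime (repunit a) (repunit b) := by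
    have h9 : 9 * Nat.gcd (repunit a) (repunit b) = 9 := by
      rw [← Nat.gcd_mul_left, nine_mul_repunit, nine_mul_repunit, gcd_pow_sub_one, h]
      norm_num
    unfold Nat.Coprime; omega
  refine hco.mul_dvd_of_dvd_of_dvd ?_ ?_
  · have : 9 * repunit a ∣ 9 * repunit (a * b) := by
      rw [nine_mul_repunit, nine_mul_repunit]
      simpa [pow_mul] using Nat.sub_dvd_pow_sub_pow ((10:ℕ)^a) 1 b
    exact (Nat.mul_dvd_mul_iff_left (by norm_num : 0 < 9)).mp this
  · have : 9 * repunit b ∣ 9 * repunit (a * b) := by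
      rw [nine_mul_repunit, nine_mul_repunit]
      simpa [pow_mul, mul_comm a b] using Nat.sub_dvd_pow_sub_pow ((10:ℕ)^b) 1 a
    exact (Nat.mul_dvd_mul_iff_left (by norm_num : 0 < 9)).mp this
end

section
/- For integers a ≥ 1 and b ≥ 1, R_{ab}/(R_a R_b) is an integer if and only if gcd(a, b) = 1, where R_n = (10^n - 1)/9. -/
/-!
Write `G_x(n) = ∑_{i<n} x^i`, so that `repunit = G_10` and `G_x(ab) = G_x(a) · G_{x^a}(b)`; the
question is whether `G_x(b)` divides `G_{x^a}(b)`. Let `d = gcd a b`, `a = a'd`, `b = b'd`.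
Modulo `G_x(b)` we have `x^b = 1`, so `x^a` has `(x^a)^{b'} = 1` and is a power of `x^d` with
exponent coprime to `b'`; hence `G_{x^a}(b) ≡ d · G_{x^d}(b')`. As `G_x(b) = G_x(d) · G_{x^d}(b')`,
divisibility is equivalent to `G_x(d) ∣ d`, and `G_x(d) > d` once `x ≥ 2` and `d ≥ 2`.
-/

open Finset

section GeomSum

variable {R : Type*} [CommSemiring R]

theorem geom_sum_range_mul (x : R) (m n : ℕ) :
    ∑ i ∈ range (m * n), x ^ i = (∑ i ∈ range m, x ^ i) * ∑ j ∈ range n, (x ^ m) ^ j := by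
  induction n with
  | zero => simp
  | succ n ih =>
    rw [Nat.mul_succ, sum_range_add, ih, sum_range_succ, mul_add]
    congr 1
    rw [sum_mul]
    exact sum_congr rfl fun i _ => by rw [pow_add, pow_mul, mul_comm]

theorem geom_sum_range_mul_of_pow_eq_one {z : R} {m : ℕ} (hz : z ^ m = 1) (n : ℕ) :
    ∑ i ∈ range (m * n), z ^ i = n * ∑ i ∈ range m, z ^ i := by
  rw [geom_sum_range_mul, hz, one_geom_sum, mul_comm]

theorem mul_mod_injOn_range_of_coprime {k m : ℕ} (hk : Nat.Coprime k m) :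
    Set.InjOn (fun i => k * i % m) (range m) := by
  intro i hi j hj hij
  exact (Nat.ModEq.cancel_left_of_coprime (Nat.coprime_comm.mp hk) hij).eq_of_lt_of_lt
    (mem_range.mp hi) (mem_range.mp hj)

theorem geom_sum_pow_of_coprime {z : R} {k m : ℕ} (hz : z ^ m = 1) (hk : Nat.Coprime k m) :
    ∑ i ∈ range m, (z ^ k) ^ i = ∑ i ∈ range m, z ^ i := by
  rcases Nat.eq_zero_or_pos m with rfl | hm
  · simp
  have hmaps : ∀ i ∈ range m, k * i % m ∈ range m := fun i _ => mem_range.mpr (Nat.mod_lt _ hm)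
  have hinj := mul_mod_injOn_range_of_coprime hk
  refine sum_nbij (fun i => k * i % m) hmaps hinj
    (surjOn_of_injOn_of_card_le _ hmaps hinj le_rfl) fun i _ => ?_
  rw [← pow_mul, ← pow_eq_pow_mod _ hz]

theorem geom_sum_pow_mul_of_pow_eq_one {z : R} {a b d : ℕ} (hz : z ^ (b * d) = 1)
    (hab : Nat.Coprime a b) :
    ∑ i ∈ range (b * d), (z ^ (a * d)) ^ i = d * ∑ j ∈ range b, (z ^ d) ^ j := by
  have hzd : (z ^ d) ^ b = 1 := by rw [← pow_mul, mul_comm, hz]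
  have hzad : (z ^ (a * d)) ^ b = 1 := by rw [mul_comm a, pow_mul, pow_right_comm, hzd, one_pow]
  rw [geom_sum_range_mul_of_pow_eq_one hzad, mul_comm a, pow_mul, geom_sum_pow_of_coprime hzd hab]

end GeomSum

theorem pow_eq_one_of_geom_sum_eq_zero {R : Type*} [CommRing R] {x : R} {n : ℕ}
    (h : ∑ i ∈ range n, x ^ i = 0) : x ^ n = 1 := by
  rw [← sub_eq_zero, ← mul_geom_sum, h, mul_zero]

theorem geom_sum_dvd_self_iff {x d : ℕ} (hx : 2 ≤ x) (hd : 1 ≤ d) :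
    (∑ i ∈ range d, x ^ i) ∣ d ↔ d = 1 := by
  refine ⟨fun h => ?_, fun h => by simp [h]⟩
  by_contra hne
  have hlt : d < ∑ i ∈ range d, x ^ i :=
    calc d = ∑ _i ∈ range d, 1 := by simp
      _ < ∑ i ∈ range d, x ^ i :=
        sum_lt_sum (fun i _ => Nat.one_le_pow _ _ (by omega))
          ⟨1, mem_range.mpr (by omega), by simp; omega⟩
  exact absurd (Nat.le_of_dvd (by omega) h) (not_le.mpr hlt)

theorem geom_sum_mul_geom_sum_dvd_iff_coprime {x a b : ℕ} (hx : 2 ≤ x) (ha : 1 ≤ a) (hb : 1 ≤ b) :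
    (∑ i ∈ range a, x ^ i) * (∑ i ∈ range b, x ^ i) ∣ ∑ i ∈ range (a * b), x ^ i ↔
      Nat.Coprime a b := by
  obtain ⟨d, a', b', hd, hcop, rfl, rfl⟩ := Nat.exists_coprime' (Nat.gcd_pos_of_pos_left b ha)
  have hb' : 1 ≤ b' := Nat.pos_of_mul_pos_right hb
  set N := ∑ i ∈ range (b' * d), x ^ i with hN
  have hsplit : N = (∑ i ∈ range d, x ^ i) * ∑ j ∈ range b', (x ^ d) ^ j := by
    rw [hN, mul_comm, geom_sum_range_mul]
  have hmod : ∑ i ∈ range (b' * d), (x ^ (a' * d)) ^ i ≡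
      d * ∑ j ∈ range b', (x ^ d) ^ j [MOD N] := by
    have hN0 : ∑ i ∈ range (b' * d), (x : ZMod N) ^ i = 0 := by
      exact_mod_cast ZMod.natCast_self N
    rw [← ZMod.natCast_eq_natCast_iff]
    push_cast
    exact geom_sum_pow_mul_of_pow_eq_one (pow_eq_one_of_geom_sum_eq_zero hN0) hcop
  calc _ ↔ N ∣ ∑ j ∈ range (b' * d), (x ^ (a' * d)) ^ j := by
        rw [geom_sum_range_mul x (a' * d),
          Nat.mul_dvd_mul_iff_left (geom_sum_pos (Nat.zero_le x) (by omega))]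
    _ ↔ N ∣ d * ∑ j ∈ range b', (x ^ d) ^ j := hmod.dvd_iff dvd_rfl
    _ ↔ ∑ i ∈ range d, x ^ i ∣ d := by
        rw [hsplit, Nat.mul_dvd_mul_iff_right (geom_sum_pos (Nat.zero_le _) (by omega))]
    _ ↔ d = 1 := geom_sum_dvd_self_iff hx hd
    _ ↔ Nat.Coprime (a' * d) (b' * d) := by
        rw [Nat.Coprime, Nat.gcd_mul_right, hcop.gcd_eq_one, one_mul]

theorem repunit_eq_geom_sum (n : ℕ) : repunit n = ∑ i ∈ range n, 10 ^ i :=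
  (Nat.geomSum_eq (by norm_num) n).symm

theorem repunit_mul_dvd_iff_coprime (a b : ℕ) (ha : 1 ≤ a) (hb : 1 ≤ b) :
    repunit a * repunit b ∣ repunit (a * b) ↔ Nat.gcd a b = 1 := by
  simp only [repunit_eq_geom_sum]
  exact geom_sum_mul_geom_sum_dvd_iff_coprime (by norm_num) ha hb
end

section
/- If a = 3^n · b with gcd(b, 3) = 1 and n ≥ 0, then 3^n divides R_a but 3^{n+1} does not divide R_a, where R_a = (10^a - 1)/9. Equivalently, the 3-adic valuation of R_a equals the 3-adic valuation of a. -/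
theorem three_adic_val_repunit (a n b : ℕ) (hb : 1 ≤ b) (ha : a = 3 ^ n * b)
    (hb3 : Nat.gcd b 3 = 1) :
    3 ^ n ∣ repunit a ∧ ¬ 3 ^ (n + 1) ∣ repunit a := by
  haveI : Fact (Nat.Prime 3) := ⟨by norm_num⟩
  have ha0 : a ≠ 0 := by
    simp [ha]; omega
  have hb3' : ¬ (3 ∣ b) := by
    intro h
    have h2 : (3:ℕ) ∣ Nat.gcd b 3 := Nat.dvd_gcd h (dvd_refl 3)
    rw [hb3] at h2
    omega
  have hval_a : padicValNat 3 a = n := by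
    rw [ha, padicValNat.mul (pow_ne_zero n (by norm_num)) (by omega),
      padicValNat.prime_pow, padicValNat.eq_zero_of_not_dvd hb3', add_zero]
  have hLTE : padicValNat 3 (10 ^ a - 1 ^ a) = padicValNat 3 (10 - 1) + padicValNat 3 a :=
    padicValNat.pow_sub_pow (by decide) (by norm_num) (by norm_num) (by norm_num) ha0
  have h9 : (9 : ℕ) ∣ 10 ^ a - 1 := by
    have := Nat.sub_dvd_pow_sub_pow 10 1 a
    simpa using this
  have hR : 10 ^ a - 1 = 9 * repunit a := by
    rw [repunit, Nat.mul_div_cancel' h9]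
  have hRpos : repunit a ≠ 0 := by
    rw [repunit]
    have : 10 ≤ 10 ^ a := by
      calc 10 = 10 ^ 1 := by norm_num
      _ ≤ 10 ^ a := Nat.pow_le_pow_right (by norm_num) (by omega)
    omega
  have hvalR : padicValNat 3 (repunit a) = n := by
    have h9val : padicValNat 3 9 = 2 := by
      have : (9 : ℕ) = 3 ^ 2 := by norm_num
      rw [this, padicValNat.prime_pow]
    have := hLTE
    rw [one_pow, hR, padicValNat.mul (by norm_num) hRpos, h9val, hval_a] at this
    norm_num at this
    omega
  constructor
  · rw [← hvalR]; exact pow_padicValNat_dvd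
  · rw [← hvalR]; exact pow_succ_padicValNat_not_dvd hRpos
end

section
/- For every integer n ≥ 0, the number r_n = 10^{11^n} + 1 is divisible by 11^{n+1} but not by 11^{n+2}. -/
theorem eleven_adic_val (n : ℕ) :
    11 ^ (n + 1) ∣ 10 ^ (11 ^ n) + 1 ∧ ¬ 11 ^ (n + 2) ∣ 10 ^ (11 ^ n) + 1 := by
  haveI : Fact (Nat.Prime 11) := ⟨by norm_num⟩
  have hval : padicValNat 11 (10 ^ (11 ^ n) + 1) = n + 1 := by
    have h := padicValNat.pow_add_pow (p := 11) (x := 10) (y := 1) (n := 11 ^ n)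
      (by decide) (by norm_num) (by norm_num) (Odd.pow (by decide : Odd 11)) 
    simp only [one_pow] at h
    rw [h, padicValNat.prime_pow, padicValNat.self (by norm_num)]
    omega
  have hne : 10 ^ (11 ^ n) + 1 ≠ 0 := by positivity
  constructor
  · rw [padicValNat_dvd_iff_le hne, hval]
  · rw [padicValNat_dvd_iff_le hne, hval]
    omega
end

section
/- If a = 2 · 11^n · b with gcd(b, 11) = 1 and n ≥ 0, then 11^{n+1} divides R_a = (10^a - 1)/9 but 11^{n+2} does not. -/
theorem eleven_adic_val_repunit (a n b : ℕ) (hb : 1 ≤ b)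
    (ha : a = 2 * 11 ^ n * b) (hb11 : Nat.gcd b 11 = 1) :
    11 ^ (n + 1) ∣ repunit a ∧ ¬ 11 ^ (n + 2) ∣ repunit a := by
  haveI : Fact (Nat.Prime 11) := ⟨by norm_num⟩
  set m := 11 ^ n * b with hm
  have hm0 : m ≠ 0 := by positivity
  have hb0 : b ≠ 0 := by omega
  have hbnd : ¬ (11 ∣ b) := by
    intro h
    have : (11 : ℕ) ∣ Nat.gcd b 11 := Nat.dvd_gcd h dvd_rfl
    omega
  have hvm : padicValNat 11 m = n := by
    rw [hm, padicValNat.mul (by positivity) hb0, padicValNat.prime_pow,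
      padicValNat.eq_zero_of_not_dvd hbnd, add_zero]
  have h9 : (9 : ℕ) ∣ 10 ^ a - 1 := by
    have := Nat.sub_dvd_pow_sub_pow 10 1 a
    simpa using this
  have hrep : 9 * repunit a = 10 ^ a - 1 := by
    rw [repunit, Nat.mul_div_cancel' h9]
  have ha2 : a = 2 * m := by rw [ha, hm, mul_assoc]
  have hpow : 10 ^ a - 1 = 100 ^ m - 1 ^ m := by
    rw [ha2, pow_mul]; norm_num
  have hval : padicValNat 11 (10 ^ a - 1) = n + 1 := by
    rw [hpow, padicValNat.pow_sub_pow ⟨5, by norm_num⟩ (by norm_num) (by norm_num)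
      (by norm_num) hm0]
    have h99 : (100 : ℕ) - 1 = 11 ^ 1 * 9 := by norm_num
    rw [h99, padicValNat.mul (by norm_num) (by norm_num), padicValNat.prime_pow,
      padicValNat.eq_zero_of_not_dvd (by norm_num), hvm]
    omega
  have hrep0 : repunit a ≠ 0 := by
    intro h
    rw [h, mul_zero] at hrep
    have h10 : 10 ^ a ≥ 10 ^ 1 := Nat.pow_le_pow_right (by norm_num) (by omega)
    omega
  have hvrep : padicValNat 11 (repunit a) = n + 1 := by
    have := padicValNat.mul (p := 11) (a := 9) (b := repunit a) (by norm_num) hrep0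
    rw [hrep, hval, padicValNat.eq_zero_of_not_dvd (by norm_num), zero_add] at this
    exact this.symm
  constructor
  · rw [padicValNat_dvd_iff_le hrep0, hvrep]
  · rw [padicValNat_dvd_iff_le hrep0, hvrep]; omega
end

section
/- Define E_{n,k} = (10^{(k+1)(n+1)} - 1)/(10^{k+1} - 1). If n > 1, k > 0, and any of the following holds: (1) n is odd, (2) k is odd, (3) 3 divides n+1, (4) gcd(n+1, k+1) = 1, then E_{n,k} is composite (not prime). -/
def E (n k : ℕ) : ℕ := (10 ^ ((k + 1) * (n + 1)) - 1) / (10 ^ (k + 1) - 1)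

/-!
With `x = 10 ^ (k + 1)` and `N = n + 1`, `E n k = 1 + x + ⋯ + x ^ (N - 1)`, and each hypothesis
exhibits a proper divisor. If `N = 2b`, then `E n k = (1 + x) (1 + x ^ 2 + ⋯ + x ^ (2b - 2))`.
If `x = y ^ 2` with `N` odd, then `1 + y + ⋯ + y ^ (N - 1)` divides it, since `y + 1 ∣ y ^ N + 1`.
If `3 ∣ N`, then `3` divides it, since `x ≡ 1 [MOD 3]`. If `N` is coprime to `k + 1`, the repunit
of length `N` divides it, since repunits of coprime lengths are coprime.
-/

open Finset

theorem geom_sum_mul_geom_sum_pow {R : Type*} [CommSemiring R] (x : R) (a b : ℕ) :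
    (∑ i ∈ range a, x ^ i) * ∑ j ∈ range b, (x ^ a) ^ j = ∑ i ∈ range (a * b), x ^ i := by
  induction b with
  | zero => simp
  | succ b ih =>
    rw [sum_range_succ, mul_add, ih, Nat.mul_succ, sum_range_add, sum_mul]
    congr 1
    exact sum_congr rfl fun i _ => by ring

namespace Nat

theorem geom_sum_lt_geom_sum {x y N : ℕ} (hxy : x < y) (hN : 2 ≤ N) :
    ∑ i ∈ range N, x ^ i < ∑ i ∈ range N, y ^ i :=
  sum_lt_sum (fun i _ => Nat.pow_le_pow_left hxy.le i) ⟨1, mem_range.2 hN, by simpa⟩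

theorem lt_geom_sum {x N : ℕ} (hx : 1 < x) (hN : 2 ≤ N) : N < ∑ i ∈ range N, x ^ i := by
  simpa using geom_sum_lt_geom_sum hx hN

theorem geom_sum_modEq {x p : ℕ} (h : x ≡ 1 [MOD p]) (N : ℕ) :
    ∑ i ∈ range N, x ^ i ≡ N [MOD p] := by
  simpa using Nat.ModEq.sum fun i (_ : i ∈ range N) => h.pow i

theorem geom_sum_dvd_geom_sum_sq (y : ℕ) {N : ℕ} (hN : Odd N) :
    ∑ i ∈ range N, y ^ i ∣ ∑ i ∈ range N, (y ^ 2) ^ i := by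
  obtain ⟨c, hc⟩ := hN.nat_add_dvd_pow_add_pow y 1
  rw [one_pow] at hc
  -- `(y + 1) ∑ (y ^ 2) ^ i = ∑_{i < 2N} y ^ i = (∑ y ^ i) (y ^ N + 1)`
  have h := geom_sum_mul_geom_sum_pow y 2 N
  rw [geom_sum_two, mul_comm 2, ← geom_sum_mul_geom_sum_pow, geom_sum_two, hc,
    mul_left_comm] at h
  exact ⟨c, Nat.eq_of_mul_eq_mul_left (succ_pos y) h⟩

theorem coprime_geom_sum_of_coprime {x a b : ℕ} (hx : 1 < x) (h : a.Coprime b) :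
    (∑ i ∈ range a, x ^ i).Coprime (∑ i ∈ range b, x ^ i) := by
  have h_gcd := pow_sub_one_gcd_pow_sub_one x a b
  rw [h.gcd_eq_one, ← geom_sum_mul_of_one_le hx.le, ← geom_sum_mul_of_one_le hx.le,
    Nat.gcd_mul_right, pow_one] at h_gcd
  exact Nat.eq_of_mul_eq_mul_right (by omega) (h_gcd.trans (one_mul _).symm)

theorem geom_sum_dvd_geom_sum_pow_of_coprime {x a b : ℕ} (hx : 1 < x) (h : a.Coprime b) :
    ∑ i ∈ range a, x ^ i ∣ ∑ i ∈ range a, (x ^ b) ^ i := by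
  refine (coprime_geom_sum_of_coprime hx h).dvd_of_dvd_mul_left
    ⟨∑ i ∈ range b, (x ^ a) ^ i, ?_⟩
  rw [geom_sum_mul_geom_sum_pow, geom_sum_mul_geom_sum_pow, mul_comm b]

theorem not_prime_geom_sum_mul {x a b : ℕ} (hx : 1 < x) (ha : 2 ≤ a) (hb : 2 ≤ b) :
    ¬ (∑ i ∈ range (a * b), x ^ i).Prime := by
  rw [← geom_sum_mul_geom_sum_pow]
  exact not_prime_mul (by linarith [lt_geom_sum hx ha])
    (by linarith [lt_geom_sum (Nat.one_lt_pow (n := a) (by omega) hx) hb])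

theorem not_prime_geom_sum_sq {y N : ℕ} (hy : 1 < y) (hN : Odd N) (hN2 : 2 ≤ N) :
    ¬ (∑ i ∈ range N, (y ^ 2) ^ i).Prime :=
  not_prime_of_dvd_of_lt (geom_sum_dvd_geom_sum_sq y hN) (by linarith [lt_geom_sum hy hN2])
    (geom_sum_lt_geom_sum (lt_self_pow₀ hy one_lt_two) hN2)

theorem not_prime_geom_sum_of_modEq_one {x p N : ℕ} (hx : 1 < x) (hp : 2 ≤ p)
    (hxp : x ≡ 1 [MOD p]) (hpN : p ∣ N) : ¬ (∑ i ∈ range N, x ^ i).Prime := by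
  rcases N.eq_zero_or_pos with rfl | hN
  · simpa using not_prime_zero
  have hp_le := Nat.le_of_dvd hN hpN
  have hp_dvd : p ∣ ∑ i ∈ range N, x ^ i :=
    Nat.modEq_zero_iff_dvd.1 ((geom_sum_modEq hxp N).trans (Nat.modEq_zero_iff_dvd.2 hpN))
  exact not_prime_of_dvd_of_lt hp_dvd hp (hp_le.trans_lt (lt_geom_sum hx (hp.trans hp_le)))

theorem not_prime_geom_sum_pow_of_coprime {x a b : ℕ} (hx : 1 < x) (ha : 2 ≤ a) (hb : 2 ≤ b)
    (h : a.Coprime b) : ¬ (∑ i ∈ range a, (x ^ b) ^ i).Prime :=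
  not_prime_of_dvd_of_lt (geom_sum_dvd_geom_sum_pow_of_coprime hx h)
    (by linarith [lt_geom_sum hx ha]) (geom_sum_lt_geom_sum (lt_self_pow₀ hx hb) ha)

end Nat

theorem E_eq_geom_sum (n k : ℕ) : E n k = ∑ i ∈ range (n + 1), (10 ^ (k + 1)) ^ i := by
  rw [Nat.geomSum_eq (Nat.one_lt_pow k.succ_ne_zero (by norm_num)), E, pow_mul]

theorem E_not_prime (n k : ℕ) (hn : 1 < n) (hk : 0 < k)
    (h : Odd n ∨ Odd k ∨ 3 ∣ (n + 1) ∨ Nat.gcd (n + 1) (k + 1) = 1) :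
    ¬ (E n k).Prime := by
  rw [E_eq_geom_sum]
  have hx : 1 < 10 ^ (k + 1) := Nat.one_lt_pow k.succ_ne_zero (by norm_num)
  by_cases hn_odd : Odd n
  · obtain ⟨t, rfl⟩ := hn_odd
    rw [show 2 * t + 1 + 1 = 2 * (t + 1) by ring]
    exact Nat.not_prime_geom_sum_mul hx le_rfl (by omega)
  rcases h with hn_odd' | ⟨s, rfl⟩ | h3 | hcop
  · exact absurd hn_odd' hn_odd
  · rw [show 2 * s + 1 + 1 = (s + 1) * 2 by ring, pow_mul]
    exact Nat.not_prime_geom_sum_sq (Nat.one_lt_pow s.succ_ne_zero (by norm_num))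
      (Nat.not_odd_iff_even.1 hn_odd).add_one (by omega)
  · exact Nat.not_prime_geom_sum_of_modEq_one hx (by norm_num)
      (by simpa using (show 10 ≡ 1 [MOD 3] by decide).pow (k + 1)) h3
  · exact Nat.not_prime_geom_sum_pow_of_coprime (by norm_num) (by omega) (by omega) hcop
end
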